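/- Let α ∈ (1,2), ρ ∈ (1−1/α, 1/α), ρ̂ = 1−ρ. For every λ ≥ 0, ∫_0^∞ (1−e^{−λx}) (e^{x}−1)^{−(αρ+1)} (α−1+(1−αρ̂)e^{x}) dx = Γ(1−αρ)·[ (α−1+λ)·Γ(αρ+λ)/Γ(1+λ) − (α−1)·Γ(αρ) ]. -/

import Mathlib

/-!
Substituting `t = exp (-x)` turns the integral into
`∫₀¹ (1 - t^λ) (a - c + c t) t^(a-1) (1-t)^(-a-1) dt` with `a = αρ` and `c = α - 1`.
This integrand is `(c + λ) t^(a+λ-1) (1-t)^(-a) - c t^(a-1) (1-t)^(-a)` plus the derivative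
of `H t = (t^a - t^(a+λ)) (1-t)^(-a)`. `H` tends to `0` at both ends of `(0, 1)` (at `1` because
`0 ≤ H t ≤ max 1 λ (1-t)^(1-a)`, a Bernoulli bound), so only the beta integrals `B(a+λ, 1-a)`
and `B(a, 1-a)` remain, and they give the Gamma quotients.
-/

open MeasureTheory Set Filter Topology

theorem ofReal_rpow_mul_one_sub_rpow {p q t : ℝ} (ht : t ∈ Icc (0 : ℝ) 1) :
    (((t ^ (p - 1) * (1 - t) ^ (q - 1) : ℝ)) : ℂ) =
      (t : ℂ) ^ ((p : ℂ) - 1) * (1 - (t : ℂ)) ^ ((q : ℂ) - 1) := by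
  rw [Complex.ofReal_mul, Complex.ofReal_cpow ht.1, Complex.ofReal_cpow (sub_nonneg.2 ht.2)]
  push_cast
  rfl

theorem integrableOn_rpow_mul_one_sub_rpow {p q : ℝ} (hp : 0 < p) (hq : 0 < q) :
    IntegrableOn (fun t : ℝ => t ^ (p - 1) * (1 - t) ^ (q - 1)) (Ioo 0 1) := by
  have hC := Complex.betaIntegral_convergent (u := p) (v := q) (by simpa) (by simpa)
  rw [intervalIntegrable_iff_integrableOn_Ioc_of_le zero_le_one] at hC
  have hR := (hC.congr_fun
    (fun t ht => (ofReal_rpow_mul_one_sub_rpow (Ioc_subset_Icc_self ht)).symm)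
    measurableSet_Ioc).re
  simp only [RCLike.re_to_complex, Complex.ofReal_re] at hR
  exact IntegrableOn.mono_set hR Ioo_subset_Ioc_self

theorem integral_rpow_mul_one_sub_rpow {p q : ℝ} (hp : 0 < p) (hq : 0 < q) :
    ∫ t in Ioo (0 : ℝ) 1, t ^ (p - 1) * (1 - t) ^ (q - 1) =
      Real.Gamma p * Real.Gamma q / Real.Gamma (p + q) := by
  rw [← ProbabilityTheory.beta, ProbabilityTheory.beta_eq_betaIntegralReal p q hp hq,
    Complex.betaIntegral, intervalIntegral.integral_of_le zero_le_one,
    ← setIntegral_congr_fun measurableSet_Ioc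
      (fun t ht => ofReal_rpow_mul_one_sub_rpow (Ioc_subset_Icc_self ht)),
    integral_complex_ofReal, Complex.ofReal_re, integral_Ioc_eq_integral_Ioo]

theorem one_sub_rpow_le_max_mul {t lam : ℝ} (ht₀ : 0 ≤ t) (ht₁ : t ≤ 1)
    (hlam : 0 ≤ lam) :
    1 - t ^ lam ≤ max 1 lam * (1 - t) := by
  rcases le_total lam 1 with hle | hge
  · have : t ≤ t ^ lam := by
      simpa using Real.rpow_le_rpow_of_exponent_ge' ht₀ ht₁ hlam hle
    nlinarith [le_max_left 1 lam]
  · have := one_add_mul_self_le_rpow_one_add (s := t - 1) (by linarith) hge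
    rw [add_sub_cancel] at this
    nlinarith [le_max_right 1 lam]

theorem image_exp_neg_Ioi_zero : (fun x : ℝ => Real.exp (-x)) '' Ioi 0 = Ioo 0 1 := by
  rw [show (fun x : ℝ => Real.exp (-x)) = Real.exp ∘ Neg.neg from rfl, image_comp,
    image_neg_Ioi, neg_zero, Real.image_exp_Iio, Real.exp_zero]

theorem integral_Ioi_exp_neg_smul_comp {E : Type*} [NormedAddCommGroup E] [NormedSpace ℝ E]
    (f : ℝ → E) :
    ∫ x in Ioi (0 : ℝ), Real.exp (-x) • f (Real.exp (-x)) =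
      ∫ t in Ioo (0 : ℝ) 1, f t := by
  rw [← image_exp_neg_Ioi_zero,
    integral_image_eq_integral_abs_deriv_smul (f := fun x => Real.exp (-x)) measurableSet_Ioi
      (fun x _ => (Real.hasDerivAt_exp (-x)).comp x (hasDerivAt_neg x) |>.hasDerivWithinAt)
      (Real.exp_injective.comp neg_injective).injOn]
  simp [abs_of_pos (Real.exp_pos _)]

noncomputable def ladderIntegrand (a c lam t : ℝ) : ℝ :=
  (1 - t ^ lam) * (a - c + c * t) * (t ^ (a - 1) * (1 - t) ^ (-a - 1))

noncomputable def ladderCorrection (a lam t : ℝ) : ℝ :=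
  (t ^ a - t ^ (a + lam)) * (1 - t) ^ (-a)

section Ladder

variable {a lam : ℝ}

theorem hasDerivAt_ladderCorrection (c : ℝ) {t : ℝ} (ht : t ∈ Ioo (0 : ℝ) 1) :
    HasDerivAt (ladderCorrection a lam)
      (ladderIntegrand a c lam t - (c + lam) * (t ^ (a + lam - 1) * (1 - t) ^ (1 - a - 1)) +
        c * (t ^ (a - 1) * (1 - t) ^ (1 - a - 1))) t := by
  obtain ⟨ht₀, ht₁⟩ := ht
  have h1t : 0 < 1 - t := sub_pos.2 ht₁
  have hpow : ∀ p, HasDerivAt (fun t : ℝ => t ^ p) (p * t ^ (p - 1)) t := fun p => by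
    simpa using Real.hasDerivAt_rpow_const (p := p) (Or.inl ht₀.ne')
  have hright : HasDerivAt (fun t : ℝ => (1 - t) ^ (-a)) (a * (1 - t) ^ (-a - 1)) t := by
    convert ((hasDerivAt_id t).const_sub 1).rpow_const (p := -a) (Or.inl h1t.ne') using 1 <;>
      simp
  show HasDerivAt (fun t => (t ^ a - t ^ (a + lam)) * (1 - t) ^ (-a)) _ t
  refine (((hpow a).sub (hpow (a + lam))).mul hright).congr_deriv ?_
  have e₁ : t ^ a = t ^ (a - 1) * t := by
    rw [← Real.rpow_add_one ht₀.ne', sub_add_cancel]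
  have e₂ : t ^ (a + lam - 1) = t ^ (a - 1) * t ^ lam := by
    rw [← Real.rpow_add ht₀, sub_add_eq_add_sub]
  have e₃ : t ^ (a + lam) = t ^ (a - 1) * t * t ^ lam := by
    rw [← e₁, ← Real.rpow_add ht₀]
  have e₄ : (1 - t) ^ (-a) = (1 - t) ^ (-a - 1) * (1 - t) := by
    rw [← Real.rpow_add_one h1t.ne', sub_add_cancel]
  have e₅ : (1 - t) ^ (1 - a - 1) = (1 - t) ^ (-a - 1) * (1 - t) := by
    rw [sub_sub_cancel_left, e₄]
  simp only [ladderIntegrand, Pi.sub_apply, e₁, e₂, e₃, e₄, e₅]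
  ring

theorem rpow_sub_rpow_add_mem_Icc (ha : 0 ≤ a) (hlam : 0 ≤ lam) {t : ℝ} (ht₀ : 0 < t)
    (ht₁ : t ≤ 1) : t ^ a - t ^ (a + lam) ∈ Icc 0 (max 1 lam * (1 - t)) := by
  have hta : t ^ (a + lam) = t ^ a * t ^ lam := Real.rpow_add ht₀ a lam
  have hs : 0 ≤ 1 - t ^ lam := sub_nonneg.2 (Real.rpow_le_one ht₀.le ht₁ hlam)
  have hb := one_sub_rpow_le_max_mul ht₀.le ht₁ hlam
  have h0 : 0 ≤ t ^ a := Real.rpow_nonneg ht₀.le a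
  have h1 : t ^ a ≤ 1 := Real.rpow_le_one ht₀.le ht₁ ha
  rw [hta]
  constructor <;> nlinarith

theorem tendsto_ladderCorrection_nhdsGT_zero (ha : 0 < a) (hlam : 0 ≤ lam) :
    Tendsto (ladderCorrection a lam) (𝓝[>] 0) (𝓝 0) := by
  have hcont : ContinuousAt (ladderCorrection a lam) 0 :=
    ((Real.continuousAt_rpow_const _ _ (Or.inr ha.le)).sub
      (Real.continuousAt_rpow_const _ _ (Or.inr (by linarith)))).mul
      ((Real.continuousAt_rpow_const _ _ (Or.inl (by norm_num))).comp (by fun_prop))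
  have hzero : ladderCorrection a lam 0 = 0 := by
    simp [ladderCorrection, Real.zero_rpow ha.ne', Real.zero_rpow (by linarith : a + lam ≠ 0)]
  simpa [hzero] using hcont.tendsto.mono_left nhdsWithin_le_nhds

theorem tendsto_ladderCorrection_nhdsLT_one (ha : 0 ≤ a) (ha₁ : a < 1) (hlam : 0 ≤ lam) :
    Tendsto (ladderCorrection a lam) (𝓝[<] 1) (𝓝 0) := by
  have hbound : Tendsto (fun t : ℝ => max 1 lam * (1 - t) ^ (1 - a)) (𝓝[<] 1) (𝓝 0) := by
    have hcont : ContinuousAt (fun t : ℝ => max 1 lam * (1 - t) ^ (1 - a)) 1 :=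
      continuousAt_const.mul
        ((Real.continuousAt_rpow_const _ _ (Or.inr (by linarith))).comp (by fun_prop))
    simpa [Real.zero_rpow (by linarith : 1 - a ≠ 0)] using
      hcont.tendsto.mono_left nhdsWithin_le_nhds
  refine squeeze_zero' ?_ ?_ hbound <;>
    filter_upwards [Ioo_mem_nhdsLT zero_lt_one] with t ⟨ht₀, ht₁⟩
  all_goals
    have hmem := rpow_sub_rpow_add_mem_Icc ha hlam ht₀ ht₁.le
    have hpos : 0 < 1 - t := sub_pos.2 ht₁
    have hpow : (1 - t) ^ (1 - a) = (1 - t) * (1 - t) ^ (-a) := by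
      rw [sub_eq_neg_add 1 a, Real.rpow_add_one hpos.ne', mul_comm]
    simp only [ladderCorrection]
  · exact mul_nonneg hmem.1 (Real.rpow_nonneg hpos.le _)
  · rw [hpow, ← mul_assoc]
    exact mul_le_mul_of_nonneg_right hmem.2 (Real.rpow_nonneg hpos.le _)

theorem integrableOn_ladderIntegrand (ha : 0 < a) (ha₁ : a < 1) (hlam : 0 ≤ lam) (c : ℝ) :
    IntegrableOn (ladderIntegrand a c lam) (Ioo 0 1) := by
  refine ((integrableOn_rpow_mul_one_sub_rpow ha (sub_pos.2 ha₁)).const_mul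
    (max 1 lam * (|a - c| + |c|))).mono' (by unfold ladderIntegrand; fun_prop) ?_
  refine (ae_restrict_iff' measurableSet_Ioo).2
    (Eventually.of_forall fun t ⟨ht₀, ht₁⟩ => ?_)
  have hpos : 0 < 1 - t := sub_pos.2 ht₁
  have hlin : |a - c + c * t| ≤ |a - c| + |c| := by
    refine (abs_add_le _ _).trans ?_
    rw [abs_mul, abs_of_pos ht₀]
    gcongr
    exact mul_le_of_le_one_right (abs_nonneg c) ht₁.le
  have hpow : (1 - t) ^ (1 - a - 1) = (1 - t) * (1 - t) ^ (-a - 1) := by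
    rw [sub_sub_cancel_left, mul_comm, ← Real.rpow_add_one hpos.ne', sub_add_cancel]
  have hkernel : 0 ≤ t ^ (a - 1) * (1 - t) ^ (-a - 1) := by positivity
  calc ‖ladderIntegrand a c lam t‖
      = |1 - t ^ lam| * |a - c + c * t| * (t ^ (a - 1) * (1 - t) ^ (-a - 1)) := by
        rw [ladderIntegrand, Real.norm_eq_abs, abs_mul, abs_mul, abs_of_nonneg hkernel]
    _ ≤ (max 1 lam * (1 - t)) * (|a - c| + |c|) * (t ^ (a - 1) * (1 - t) ^ (-a - 1)) := by
        gcongr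
        rw [abs_of_nonneg (sub_nonneg.2 (Real.rpow_le_one ht₀.le ht₁.le hlam))]
        exact one_sub_rpow_le_max_mul ht₀.le ht₁.le hlam
    _ = max 1 lam * (|a - c| + |c|) * (t ^ (a - 1) * (1 - t) ^ (1 - a - 1)) := by
        rw [hpow]; ring

theorem integral_ladderIntegrand (ha : 0 < a) (ha₁ : a < 1) (hlam : 0 ≤ lam) (c : ℝ) :
    ∫ t in Ioo (0 : ℝ) 1, ladderIntegrand a c lam t =
      Real.Gamma (1 - a) *
        ((c + lam) * Real.Gamma (a + lam) / Real.Gamma (1 + lam) - c * Real.Gamma a) := by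
  have hβ₁ := integrableOn_rpow_mul_one_sub_rpow (by linarith : 0 < a + lam) (sub_pos.2 ha₁)
  have hβ₂ := integrableOn_rpow_mul_one_sub_rpow ha (sub_pos.2 ha₁)
  have hg := integrableOn_ladderIntegrand ha ha₁ hlam c
  have hFTC := intervalIntegral.integral_eq_sub_of_hasDerivAt_of_tendsto zero_lt_one
    (fun t ht => hasDerivAt_ladderCorrection c ht)
    ((intervalIntegrable_iff_integrableOn_Ioo_of_le zero_le_one).2
      ((hg.sub (hβ₁.const_mul (c + lam))).add (hβ₂.const_mul c)))
    (tendsto_ladderCorrection_nhdsGT_zero ha hlam)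
    (tendsto_ladderCorrection_nhdsLT_one ha.le ha₁ hlam)
  rw [intervalIntegral.integral_of_le zero_le_one, integral_Ioc_eq_integral_Ioo,
    integral_add ?_ (hβ₂.const_mul _), integral_sub hg (hβ₁.const_mul _), integral_const_mul,
    integral_const_mul, integral_rpow_mul_one_sub_rpow (by linarith) (by linarith),
    integral_rpow_mul_one_sub_rpow ha (by linarith), add_sub_cancel,
    show a + lam + (1 - a) = 1 + lam by ring, Real.Gamma_one, div_one] at hFTC
  · linear_combination hFTC
  · exact hg.sub (hβ₁.const_mul _)

end Ladder

theorem exp_neg_mul_ladderIntegrand_exp_neg (a c lam : ℝ) {x : ℝ} (hx : 0 ≤ x) :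
    Real.exp (-x) * ladderIntegrand a c lam (Real.exp (-x)) =
      (1 - Real.exp (-lam * x)) * (Real.exp x - 1) ^ (-(a + 1)) *
        (c + (a - c) * Real.exp x) := by
  have hpow : ∀ y z : ℝ, Real.exp y ^ z = Real.exp (y * z) := fun y z => (Real.exp_mul y z).symm
  have hfactor : Real.exp x - 1 = Real.exp x * (1 - Real.exp (-x)) := by
    rw [mul_sub, mul_one, ← Real.exp_add, add_neg_cancel, Real.exp_zero]
  have hE : Real.exp x * Real.exp (-x) = 1 := by
    rw [← Real.exp_add, add_neg_cancel, Real.exp_zero]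
  rw [ladderIntegrand, hfactor, Real.mul_rpow (Real.exp_pos x).le
      (sub_nonneg.2 (Real.exp_le_one_iff.2 (neg_nonpos.2 hx))),
    hpow, hpow, hpow, show -(a + 1) = -a - 1 by ring,
    show x * (-a - 1) = -x * a + -x by ring, show -x * (a - 1) = -x * a + x by ring,
    show -x * lam = -lam * x by ring, Real.exp_add, Real.exp_add]
  linear_combination (1 - Real.exp (-lam * x)) * Real.exp (-x * a) *
    (1 - Real.exp (-x)) ^ (-a - 1) * c * Real.exp (-x) * hE

theorem ascending_ladder_laplace_exponent_big_alpha
    (α ρ : ℝ) (hα : α ∈ Set.Ioo (1:ℝ) 2) (hρ : ρ ∈ Set.Ioo (1 - 1/α) (1/α))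
    (lam : ℝ) (hlam : 0 ≤ lam) :
    ∫ x in Set.Ioi (0:ℝ),
        (1 - Real.exp (-lam * x)) * (Real.exp x - 1) ^ (-(α * ρ + 1)) *
          (α - 1 + (1 - α * (1 - ρ)) * Real.exp x) =
    Real.Gamma (1 - α * ρ) *
      ((α - 1 + lam) * Real.Gamma (α * ρ + lam) / Real.Gamma (1 + lam) -
        (α - 1) * Real.Gamma (α * ρ)) := by
  have hα₀ : 0 < α := by linarith [hα.1]
  have hlower : α - 1 < α * ρ := by
    simpa [mul_sub, hα₀.ne'] using mul_lt_mul_of_pos_left hρ.1 hα₀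
  have hupper : α * ρ < 1 := by
    simpa [hα₀.ne'] using mul_lt_mul_of_pos_left hρ.2 hα₀
  have hαρ : 0 < α * ρ := by linarith [hα.1]
  have hsubst : ∀ x ∈ Ioi (0 : ℝ),
      (1 - Real.exp (-lam * x)) * (Real.exp x - 1) ^ (-(α * ρ + 1)) *
          (α - 1 + (1 - α * (1 - ρ)) * Real.exp x) =
        Real.exp (-x) • ladderIntegrand (α * ρ) (α - 1) lam (Real.exp (-x)) := fun x hx => by
    rw [smul_eq_mul, exp_neg_mul_ladderIntegrand_exp_neg _ _ _ (le_of_lt hx)]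
    congr 1
    ring
  rw [setIntegral_congr_fun measurableSet_Ioi hsubst, integral_Ioi_exp_neg_smul_comp,
    integral_ladderIntegrand hαρ hupper hlam]
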